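/- The difference Jacobian J(p_x,p_y) = ⊤_û det‖−û_*‖ det‖f̂_x − f̂_y − û∇f(x,y)‖, i.e., the coefficient of û_1···û_n in det‖−û_*‖·∏_i (f̂_{i,x} − f̂_{i,y} − û∇f_i(x,y)), is a cycle: ∂[J(p_x,p_y)] = 0 in C(x,y,f̂_x,f̂_y). -/

import Mathlib

/-!
Each factor `f̂_{i,x} − f̂_{i,y} − û∇fᵢ(x,y)` is a one-form whose coefficient vector pairs with
the Koszul weights to `fᵢ(x) − fᵢ(y) − (x − y)·∇fᵢ(x,y) = 0`, so it is a cycle. For a one-form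
`ω` the Leibniz rule `∂(ω ∧ b) = ∂ω · b − ω ∧ ∂b` holds, hence the product of these cycles is a
cycle. Taking the coefficient of the full `û`-monomial commutes with `∂`, because the
`û`-generators come last in the order of generators: contracting a generator `f̂` past them
costs no sign, and contracting a `û` kills the top coefficient. So `J` is a cycle.
-/

open Finset MvPolynomial

noncomputable section

variable {σ : Type*} [DecidableEq σ] [LinearOrder σ] [Fintype σ]
variable {A : Type*} [CommRing A]

/-- The Koszul boundary operator: contraction with `∑ i, f i · f̂⋆ⁱ`. -/
def kD (f : σ → A) (c : Finset σ → A) : Finset σ → A :=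
  fun S => ∑ i ∈ Sᶜ, (-1 : A) ^ (S.filter (· < i)).card * f i * c (insert i S)

/-- The exterior (wedge) product in coordinates. -/
def kmul (a b : Finset σ → A) : Finset σ → A :=
  fun U => ∑ S ∈ U.powerset,
    (-1 : A) ^ (∑ i ∈ S, ((U \ S).filter (· < i)).card) * a S * b (U \ S)

/-- The identity element `1` of the Koszul complex. -/
def kone : Finset σ → A := fun S => if S = ∅ then 1 else 0

end

noncomputable section

/-- `R[x,y]`. -/
abbrev A2 (R : Type*) [CommRing R] (n : ℕ) := MvPolynomial (Fin n ⊕ Fin n) R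

variable (R : Type*) [CommRing R] (n s : ℕ)

/-- Substitution `x`-variables: `R[z] → R[x,y]`, `zₖ ↦ xₖ`. -/
def rx : MvPolynomial (Fin n) R →ₐ[R] A2 R n :=
  aeval (fun k => X (Sum.inl k))

/-- Substitution `y`-variables: `R[z] → R[x,y]`, `zₖ ↦ yₖ`. -/
def ry : MvPolynomial (Fin n) R →ₐ[R] A2 R n :=
  aeval (fun k => X (Sum.inr k))

/-- The system `x − y`. -/
def u : Fin n → A2 R n := fun k => X (Sum.inl k) - X (Sum.inr k)

/-- Index of the generator `f̂_{i,x}` among the wedge generators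
`(f̂_x, f̂_y, û)` of `C(x,y,f̂_x,f̂_y,û)`. -/
def ex (i : Fin s) : Fin (s + s + n) := Fin.castAdd n (Fin.castAdd s i)

/-- Index of the generator `f̂_{i,y}`. -/
def ey (i : Fin s) : Fin (s + s + n) := Fin.castAdd n (Fin.natAdd s i)

/-- Index of the generator `ûₖ`. -/
def eu (k : Fin n) : Fin (s + s + n) := Fin.natAdd (s + s) k

/-- The weights of the Koszul complex `C(x,y,f̂_x,f̂_y,û)`:
`f̂_{i,x} ↦ fᵢ(x)`, `f̂_{i,y} ↦ fᵢ(y)`, `ûₖ ↦ xₖ − yₖ`. -/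
def Fw (f : Fin s → MvPolynomial (Fin n) R) : Fin (s + s + n) → A2 R n :=
  Fin.append (Fin.append (fun i => rx R n (f i)) (fun i => ry R n (f i))) (u R n)

/-- The wedge generator with index `j`. -/
def del (j : Fin (s + s + n)) : Finset (Fin (s + s + n)) → A2 R n :=
  fun S => if S = {j} then 1 else 0

/-- The cycle `f̂_{i,x} − f̂_{i,y} − û∇fᵢ(x,y)` built from divided differences
`g i : Fin n → R[x,y]` of `fᵢ`. -/
def Ei (g : Fin s → Fin n → A2 R n) (i : Fin s) :
    Finset (Fin (s + s + n)) → A2 R n :=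
  del R n s (ex n s i) - del R n s (ey n s i) -
    fun S => ∑ k, if S = {eu n s k} then g i k else 0

/-- The product `∏ᵢ (f̂_{i,x} − f̂_{i,y} − û∇fᵢ(x,y))`. -/
def Pprod (g : Fin s → Fin n → A2 R n) : Finset (Fin (s + s + n)) → A2 R n :=
  (List.ofFn (fun i : Fin s => Ei R n s g i)).foldr kmul kone

/-- The set of `û`-indices. -/
def uSet : Finset (Fin (s + s + n)) := Finset.univ.image (eu n s)

/-- The difference Jacobian
`J(p_x,p_y) = ⊤_û det‖−û⋆‖·∏ᵢ(f̂_{i,x} − f̂_{i,y} − û∇fᵢ(x,y))`: the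
top-`û`-coefficient extraction of the product of the cycles `Ei`. -/
def Jac (g : Fin s → Fin n → A2 R n) : Finset (Fin (s + s + n)) → A2 R n :=
  fun S => if Disjoint S (uSet n s) then Pprod R n s g (S ∪ uSet n s) else 0

end

section Forms

variable {σ : Type*} [DecidableEq σ] {A : Type*} [CommRing A]

def topCoeff (U : Finset σ) (c : Finset σ → A) : Finset σ → A :=
  fun S => if Disjoint S U then c (S ∪ U) else 0

lemma topCoeff_zero (U : Finset σ) : topCoeff U (0 : Finset σ → A) = 0 := by
  funext S
  simp [topCoeff]

variable [Fintype σ]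

def oneForm : (σ → A) →ₗ[A] Finset σ → A where
  toFun c S := ∑ j, if S = {j} then c j else 0
  map_add' c d := by
    funext S
    simp only [Pi.add_apply, ← sum_add_distrib]
    exact sum_congr rfl fun j _ => by split_ifs <;> simp
  map_smul' a c := by
    funext S
    simp only [Pi.smul_apply, smul_eq_mul, RingHom.id_apply, mul_sum]
    exact sum_congr rfl fun j _ => by split_ifs <;> simp

lemma oneForm_apply_singleton (c : σ → A) (j : σ) : oneForm c {j} = c j := by
  simp [oneForm]

lemma oneForm_apply_of_ne_singleton (c : σ → A) {T : Finset σ} (hT : ∀ j, T ≠ {j}) :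
    oneForm c T = 0 :=
  sum_eq_zero fun j _ => if_neg (hT j)

lemma oneForm_single (j : σ) (a : A) :
    oneForm (Pi.single j a) = fun S => if S = {j} then a else 0 := by
  funext S
  simp only [oneForm, LinearMap.coe_mk, AddHom.coe_mk]
  rw [sum_eq_single j (fun k _ hk => by simp [hk]) (by simp)]
  simp

end Forms

section Koszul

variable {σ : Type*} [LinearOrder σ] {A : Type*} [CommRing A]

def koszulSign (T : Finset σ) (i : σ) : A := (-1) ^ (T.filter (· < i)).card

lemma koszulSign_mul_self (T : Finset σ) (i : σ) :
    (koszulSign T i : A) * koszulSign T i = 1 := by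
  rw [koszulSign, ← pow_add, Even.neg_one_pow ⟨_, rfl⟩]

variable [DecidableEq σ]

lemma koszulSign_insert_mul_koszulSign_insert {i j : σ} {T : Finset σ} (hij : i ≠ j)
    (hi : i ∉ T) (hj : j ∉ T) :
    (koszulSign (insert j T) i : A) * koszulSign (insert i T) j =
      -(koszulSign T j * koszulSign T i) := by
  simp only [koszulSign]
  rcases hij.lt_or_gt with h | h
  · rw [filter_insert, if_neg h.not_gt, filter_insert, if_pos h,
      card_insert_of_notMem (by simp [hi]), pow_succ]
    ring
  · rw [filter_insert, if_pos h, filter_insert, if_neg h.not_gt,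
      card_insert_of_notMem (by simp [hj]), pow_succ]
    ring

lemma kmul_zero (a : Finset σ → A) : kmul a 0 = 0 := by
  funext U
  simp [kmul]

variable [Fintype σ]

lemma kD_apply (w : σ → A) (c : Finset σ → A) (S : Finset σ) :
    kD w c S = ∑ i ∈ Sᶜ, koszulSign S i * w i * c (insert i S) := rfl

lemma kD_kone (w : σ → A) : kD w (kone : Finset σ → A) = 0 := by
  funext S
  exact sum_eq_zero fun i _ => by simp [kone]

lemma kmul_oneForm_apply (c : σ → A) (b : Finset σ → A) (U : Finset σ) :
    kmul (oneForm c) b U = ∑ j ∈ U, koszulSign (U.erase j) j * c j * b (U.erase j) := by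
  have hsub : U.map ⟨_, singleton_injective⟩ ⊆ U.powerset := by
    intro T hT
    obtain ⟨j, hj, rfl⟩ := mem_map.1 hT
    simpa using hj
  rw [kmul, ← sum_subset hsub, sum_map]
  · refine sum_congr rfl fun j _ => ?_
    simp [oneForm_apply_singleton, sdiff_singleton_eq_erase, koszulSign]
  · intro T _ hT
    rw [oneForm_apply_of_ne_singleton c fun j hj => hT (by simp_all), mul_zero, zero_mul]

lemma kD_kmul_oneForm_apply (w c : σ → A) (b : Finset σ → A) (S : Finset σ) :
    kD w (kmul (oneForm c) b) S = (∑ i ∈ Sᶜ, w i * c i) * b S +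
      ∑ i ∈ Sᶜ, ∑ j ∈ S, koszulSign S i * koszulSign (insert i (S.erase j)) j *
        (w i * c j * b (insert i (S.erase j))) := by
  rw [kD_apply, sum_mul, ← sum_add_distrib]
  refine sum_congr rfl fun i hi => ?_
  have hiS : i ∉ S := by simpa using hi
  rw [kmul_oneForm_apply, sum_insert hiS, erase_insert hiS, mul_add, mul_sum]
  congr 1
  · linear_combination (w i * c i * b S) * koszulSign_mul_self (A := A) S i
  · refine sum_congr rfl fun j hj => ?_
    rw [erase_insert_of_ne (ne_of_mem_of_not_mem hj hiS).symm]
    ring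

lemma kmul_oneForm_kD_apply (w c : σ → A) (b : Finset σ → A) (S : Finset σ) :
    kmul (oneForm c) (kD w b) S = (∑ j ∈ S, w j * c j) * b S +
      ∑ j ∈ S, ∑ i ∈ Sᶜ, koszulSign (S.erase j) j * koszulSign (S.erase j) i *
        (w i * c j * b (insert i (S.erase j))) := by
  rw [kmul_oneForm_apply, sum_mul, ← sum_add_distrib]
  refine sum_congr rfl fun j hj => ?_
  rw [kD_apply, compl_erase, sum_insert (by simp [hj]), insert_erase hj, mul_add, mul_sum]
  congr 1
  · linear_combination (w j * c j * b S) * koszulSign_mul_self (A := A) (S.erase j) j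
  · exact sum_congr rfl fun i _ => by ring

lemma kD_kmul_oneForm (w c : σ → A) (b : Finset σ → A) :
    kD w (kmul (oneForm c) b) = (w ⬝ᵥ c) • b - kmul (oneForm c) (kD w b) := by
  funext S
  have hcross : ∑ i ∈ Sᶜ, ∑ j ∈ S, koszulSign S i * koszulSign (insert i (S.erase j)) j *
        (w i * c j * b (insert i (S.erase j))) =
      -∑ j ∈ S, ∑ i ∈ Sᶜ, koszulSign (S.erase j) j * koszulSign (S.erase j) i *
        (w i * c j * b (insert i (S.erase j))) := by
    rw [sum_comm, ← sum_neg_distrib]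
    refine sum_congr rfl fun j hj => ?_
    rw [← sum_neg_distrib]
    refine sum_congr rfl fun i hi => ?_
    have hiS : i ∉ S := by simpa using hi
    have hsign := koszulSign_insert_mul_koszulSign_insert (A := A)
      (ne_of_mem_of_not_mem hj hiS).symm (fun h => hiS (mem_of_mem_erase h)) (notMem_erase j S)
    rw [insert_erase hj] at hsign
    rw [hsign]
    ring
  rw [Pi.sub_apply, Pi.smul_apply, smul_eq_mul, eq_sub_iff_add_eq, kD_kmul_oneForm_apply,
    kmul_oneForm_kD_apply, hcross, dotProduct, ← sum_add_sum_compl S]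
  ring

lemma kD_foldr_kmul_oneForm_eq_zero (w : σ → A) (cs : List (σ → A))
    (hcs : ∀ c ∈ cs, w ⬝ᵥ c = 0) :
    kD w ((cs.map oneForm).foldr kmul kone) = 0 := by
  induction cs with
  | nil => exact kD_kone w
  | cons c cs ih =>
    rw [List.map_cons, List.foldr_cons, kD_kmul_oneForm, hcs c List.mem_cons_self,
      ih fun d hd => hcs d (List.mem_cons_of_mem c hd), kmul_zero, zero_smul, sub_zero]

lemma kD_topCoeff (w : σ → A) (c : Finset σ → A) {U : Finset σ}
    (hU : IsUpperSet (U : Set σ)) :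
    kD w (topCoeff U c) = topCoeff U (kD w c) := by
  funext S
  by_cases hSU : Disjoint S U
  · rw [topCoeff, if_pos hSU, kD_apply, kD_apply]
    have hsign : ∀ i ∉ U, koszulSign (S ∪ U) i = (koszulSign S i : A) := fun i hiU => by
      rw [koszulSign, koszulSign, filter_union, filter_false_of_mem fun j hj hji =>
        hiU (hU hji.le hj), union_empty]
    calc ∑ i ∈ Sᶜ, koszulSign S i * w i * topCoeff U c (insert i S)
        = ∑ i ∈ (S ∪ U)ᶜ, koszulSign S i * w i * topCoeff U c (insert i S) := by
          refine (sum_subset (compl_subset_compl.2 subset_union_left) fun i _ hi => ?_).symm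
          have hiU : i ∈ U := by simp_all
          rw [topCoeff, if_neg fun h => disjoint_left.1 h (mem_insert_self i S) hiU, mul_zero]
      _ = ∑ i ∈ (S ∪ U)ᶜ, koszulSign (S ∪ U) i * w i * c (insert i (S ∪ U)) := by
          refine sum_congr rfl fun i hi => ?_
          obtain ⟨hiS, hiU⟩ : i ∉ S ∧ i ∉ U := by simpa using hi
          rw [topCoeff, if_pos (disjoint_insert_left.2 ⟨hiU, hSU⟩), insert_union, hsign i hiU]
  · rw [topCoeff, if_neg hSU, kD_apply]
    exact sum_eq_zero fun i _ => by
      rw [topCoeff, if_neg fun h => hSU (disjoint_insert_left.1 h).2, mul_zero]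

end Koszul

noncomputable section DifferenceJacobian

variable (R : Type*) [CommRing R] (n s : ℕ)

lemma Fw_ex (f : Fin s → MvPolynomial (Fin n) R) (i : Fin s) :
    Fw R n s f (ex n s i) = rx R n (f i) := by
  simp only [Fw, ex, Fin.append_left]

lemma Fw_ey (f : Fin s → MvPolynomial (Fin n) R) (i : Fin s) :
    Fw R n s f (ey n s i) = ry R n (f i) := by
  simp only [Fw, ey, Fin.append_left, Fin.append_right]

lemma Fw_eu (f : Fin s → MvPolynomial (Fin n) R) (k : Fin n) :
    Fw R n s f (eu n s k) = u R n k := by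
  simp only [Fw, eu, Fin.append_right]

def cycleCoeffs (g : Fin s → Fin n → A2 R n) (i : Fin s) : Fin (s + s + n) → A2 R n :=
  Pi.single (ex n s i) 1 - Pi.single (ey n s i) 1 - ∑ k, Pi.single (eu n s k) (g i k)

lemma Ei_eq_oneForm (g : Fin s → Fin n → A2 R n) (i : Fin s) :
    Ei R n s g i = oneForm (cycleCoeffs R n s g i) := by
  funext S
  simp [Ei, del, cycleCoeffs, oneForm_single]

lemma Fw_dotProduct_cycleCoeffs (f : Fin s → MvPolynomial (Fin n) R)
    (g : Fin s → Fin n → A2 R n) (hg : ∀ i, rx R n (f i) - ry R n (f i) = ∑ k, u R n k * g i k)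
    (i : Fin s) :
    Fw R n s f ⬝ᵥ cycleCoeffs R n s g i = 0 := by
  simp [cycleCoeffs, dotProduct_sum, Fw_ex, Fw_ey, Fw_eu, hg i]

lemma Pprod_eq_foldr (g : Fin s → Fin n → A2 R n) :
    Pprod R n s g = ((List.ofFn (cycleCoeffs R n s g)).map oneForm).foldr kmul kone := by
  simp only [Pprod, List.map_ofFn, Function.comp_def, Ei_eq_oneForm]

lemma kD_Pprod (f : Fin s → MvPolynomial (Fin n) R) (g : Fin s → Fin n → A2 R n)
    (hg : ∀ i, rx R n (f i) - ry R n (f i) = ∑ k, u R n k * g i k) :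
    kD (Fw R n s f) (Pprod R n s g) = 0 := by
  rw [Pprod_eq_foldr]
  refine kD_foldr_kmul_oneForm_eq_zero _ _ fun c hc => ?_
  obtain ⟨i, rfl⟩ := List.mem_ofFn.1 hc
  exact Fw_dotProduct_cycleCoeffs R n s f g hg i

lemma isUpperSet_uSet : IsUpperSet (uSet n s : Set (Fin (s + s + n))) := by
  intro a b hab ha
  obtain ⟨k, -, rfl⟩ := mem_image.1 ha
  have hb : s + s ≤ (b : ℕ) := le_trans (by simp [eu]) (Fin.le_def.1 hab)
  exact mem_image.2 ⟨⟨b - (s + s), by omega⟩, mem_univ _, Fin.ext (by simp [eu]; omega)⟩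

end DifferenceJacobian

/-- The difference Jacobian is a cycle. -/
theorem difference_jacobian_is_cycle {R : Type*} [CommRing R] (n s : ℕ)
    (f : Fin s → MvPolynomial (Fin n) R)
    (g : Fin s → Fin n → A2 R n)
    (hg : ∀ i, rx R n (f i) - ry R n (f i) = ∑ k, u R n k * g i k) :
    kD (Fw R n s f) (Jac R n s g) = 0 := by
  rw [show Jac R n s g = topCoeff (uSet n s) (Pprod R n s g) from rfl,
    kD_topCoeff _ _ (isUpperSet_uSet n s), kD_Pprod R n s f g hg, topCoeff_zero]
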